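/- arXiv:1510.03481 — 2 statements merged into one kernel-verified Lean document; each statement's English description precedes it below -/
import Mathlib

section
/- Let G be a bipartite graph with parts A, B such that every vertex in A has degree a and every vertex in B has degree b, with adjacency matrix eigenvalues labeled |λ₁| ≥ |λ₂| ≥ ⋯. Then for any subsets X ⊆ A and Y ⊆ B, the number e(X,Y) of edges between X and Y satisfies |e(X,Y) − (a/|B|)·|X||Y|| ≤ λ₃·√(|X||Y|), where λ₃ is the third largest eigenvalue in absolute value of the adjacency matrix of G. -/
/-!
Write `M = [[0, N], [Nᵀ, 0]]`, `v = (1_X, 0)` and `w = (0, 1_Y - |Y|/|B|)`. Then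
`⟨v, M w⟩ = e(X,Y) - (a/|B|)|X||Y|`, `‖v‖² = |X|` and `‖w‖² ≤ |Y|`.
The vectors `(√a, ±√b)` are eigenvectors of `M` for `±√(ab)`, and Gershgorin applied to `M²`
shows that no eigenvalue exceeds `√(ab)` in absolute value. So if some eigenvalue exceeds `|λ₃|`,
then `√(ab) > |λ₃|`, the two eigenvectors `(√a, ±√b)` lie in the plane of the two leading
eigenvectors and span it, and `w`, being orthogonal to both, has no component along any
eigenvector whose eigenvalue exceeds `|λ₃|`. Expanding `⟨v, M w⟩` in an orthonormal eigenbasis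
and applying Cauchy–Schwarz bounds it by `|λ₃| ‖v‖ ‖w‖`.
-/

open Matrix

theorem eq_zero_of_orthogonal_pair {p₁ q₁ p₂ q₂ x y : ℝ} (h₁₂ : p₁ * p₂ + q₁ * q₂ = 0)
    (h₁ : p₁ * p₁ + q₁ * q₁ ≠ 0) (h₂ : p₂ * p₂ + q₂ * q₂ ≠ 0)
    (hx₁ : p₁ * x + q₁ * y = 0) (hx₂ : p₂ * x + q₂ * y = 0) : x = 0 ∧ y = 0 := by
  have hdet : p₁ * q₂ - p₂ * q₁ ≠ 0 := by
    have : (p₁ * q₂ - p₂ * q₁) ^ 2 = (p₁ * p₁ + q₁ * q₁) * (p₂ * p₂ + q₂ * q₂) := by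
      linear_combination (-(p₁ * p₂ + q₁ * q₂)) * h₁₂
    exact fun h => mul_ne_zero h₁ h₂ (by rw [← this, h]; ring)
  constructor
  · exact (mul_eq_zero.mp (by linear_combination q₂ * hx₁ - q₁ * hx₂ :
      (p₁ * q₂ - p₂ * q₁) * x = 0)).resolve_left hdet
  · exact (mul_eq_zero.mp (by linear_combination p₁ * hx₂ - p₂ * hx₁ :
      (p₁ * q₂ - p₂ * q₁) * y = 0)).resolve_left hdet

section Gershgorin

variable {n : Type*} [Fintype n] [DecidableEq n]

theorem abs_le_of_hasEigenvalue_of_sum_abs_le {P : Matrix n n ℝ} {c ν : ℝ}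
    (hP : ∀ i, ∑ j, |P i j| ≤ c) (hν : Module.End.HasEigenvalue (toLin' P) ν) : |ν| ≤ c := by
  obtain ⟨k, hk⟩ := eigenvalue_mem_ball hν
  rw [Metric.mem_closedBall, Real.dist_eq] at hk
  simp only [Real.norm_eq_abs] at hk
  calc |ν| ≤ |ν - P k k| + |P k k| := by simpa using abs_add_le (ν - P k k) (P k k)
    _ ≤ ∑ j ∈ Finset.univ.erase k, |P k j| + |P k k| := by gcongr
    _ = ∑ j, |P k j| := Finset.sum_erase_add _ _ (Finset.mem_univ k)
    _ ≤ c := hP k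

theorem sq_le_of_mulVec_eq_smul {P : Matrix n n ℝ} (hP : ∀ i j, 0 ≤ P i j) {c : ℝ}
    (hc : ∀ i, (P *ᵥ (P *ᵥ 1)) i ≤ c) {u : n → ℝ} (hu : u ≠ 0) {ν : ℝ}
    (h : P *ᵥ u = ν • u) : ν ^ 2 ≤ c := by
  have hν : Module.End.HasEigenvalue (toLin' (P * P)) (ν ^ 2) := by
    refine Module.End.hasEigenvalue_of_hasEigenvector ⟨?_, hu⟩
    rw [Module.End.mem_eigenspace_iff, toLin'_apply, ← mulVec_mulVec, h, mulVec_smul, h,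
      smul_smul, sq]
  have hrow : ∀ i, ∑ j, |(P * P) i j| ≤ c := fun i => by
    have hPP : ∀ j, 0 ≤ (P * P) i j := fun j =>
      Finset.sum_nonneg fun k _ => mul_nonneg (hP i k) (hP k j)
    have hci := hc i
    rw [mulVec_mulVec] at hci
    simpa [abs_of_nonneg (hPP _), mulVec, dotProduct] using hci
  simpa using abs_le_of_hasEigenvalue_of_sum_abs_le hrow hν

end Gershgorin

namespace Matrix.IsHermitian

variable {n : Type*} [Fintype n] [DecidableEq n] {M : Matrix n n ℝ} (hM : M.IsHermitian)

theorem dotProduct_eq_sum_eigenvectorBasis (v w : n → ℝ) :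
    v ⬝ᵥ w = ∑ k, (⇑(hM.eigenvectorBasis k) ⬝ᵥ v) * (⇑(hM.eigenvectorBasis k) ⬝ᵥ w) := by
  have := hM.eigenvectorBasis.sum_inner_mul_inner (WithLp.toLp 2 v) (WithLp.toLp 2 w)
  simp only [EuclideanSpace.inner_eq_star_dotProduct, star_trivial] at this
  rw [dotProduct_comm, ← this]
  simp only [dotProduct_comm w]

theorem eigenvectorBasis_dotProduct_mulVec (k : n) (w : n → ℝ) :
    ⇑(hM.eigenvectorBasis k) ⬝ᵥ (M *ᵥ w) = hM.eigenvalues k * (⇑(hM.eigenvectorBasis k) ⬝ᵥ w) := by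
  have hMt : Mᵀ = M := by simpa [conjTranspose_eq_transpose_of_trivial] using hM.eq
  rw [dotProduct_mulVec, ← mulVec_transpose, hMt, hM.mulVec_eigenvectorBasis, smul_dotProduct,
    smul_eq_mul]

theorem eigenvectorBasis_dotProduct_eq_zero_of_mulVec_eq_smul {z : n → ℝ} {ν : ℝ}
    (hz : M *ᵥ z = ν • z) {k : n} (hk : hM.eigenvalues k ≠ ν) :
    ⇑(hM.eigenvectorBasis k) ⬝ᵥ z = 0 := by
  have h := hM.eigenvectorBasis_dotProduct_mulVec k z
  rw [hz, dotProduct_smul, smul_eq_mul] at h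
  exact (mul_eq_mul_right_iff.mp h).resolve_left (Ne.symm hk)

theorem dotProduct_mulVec_eq_sum_eigenvalues (v w : n → ℝ) :
    v ⬝ᵥ (M *ᵥ w) = ∑ k, hM.eigenvalues k *
      ((⇑(hM.eigenvectorBasis k) ⬝ᵥ v) * (⇑(hM.eigenvectorBasis k) ⬝ᵥ w)) := by
  rw [hM.dotProduct_eq_sum_eigenvectorBasis]
  exact Finset.sum_congr rfl fun k _ => by rw [eigenvectorBasis_dotProduct_mulVec]; ring

theorem abs_dotProduct_mulVec_le {r : ℝ} (hr : 0 ≤ r) (v : n → ℝ) {w : n → ℝ}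
    (h : ∀ k, |hM.eigenvalues k| ≤ r ∨ ⇑(hM.eigenvectorBasis k) ⬝ᵥ w = 0) :
    |v ⬝ᵥ (M *ᵥ w)| ≤ r * (√(v ⬝ᵥ v) * √(w ⬝ᵥ w)) := by
  set c : n → ℝ := fun k => ⇑(hM.eigenvectorBasis k) ⬝ᵥ v
  set d : n → ℝ := fun k => ⇑(hM.eigenvectorBasis k) ⬝ᵥ w
  have hterm : ∀ k, |hM.eigenvalues k * (c k * d k)| ≤ r * (|c k| * |d k|) := fun k => by
    rcases h k with hk | hk
    · rw [abs_mul, abs_mul]; gcongr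
    · simp [d, hk]
  have hnorm : ∀ x : n → ℝ,
      x ⬝ᵥ x = ∑ k, |⇑(hM.eigenvectorBasis k) ⬝ᵥ x| ^ 2 := fun x => by
    simp_rw [sq_abs, sq]
    exact hM.dotProduct_eq_sum_eigenvectorBasis x x
  calc |v ⬝ᵥ (M *ᵥ w)| = |∑ k, hM.eigenvalues k * (c k * d k)| := by
        rw [hM.dotProduct_mulVec_eq_sum_eigenvalues]
    _ ≤ ∑ k, r * (|c k| * |d k|) :=
        (Finset.abs_sum_le_sum_abs _ _).trans (Finset.sum_le_sum fun k _ => hterm k)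
    _ ≤ r * (√(v ⬝ᵥ v) * √(w ⬝ᵥ w)) := by
        rw [← Finset.mul_sum, hnorm v, hnorm w]
        gcongr
        exact Real.sum_mul_le_sqrt_mul_sqrt _ _ _

theorem dotProduct_eq_of_eigenvectorBasis_dotProduct_eq_zero {i₀ i₁ : n} (hi : i₀ ≠ i₁)
    {z : n → ℝ} (hz : ∀ k, k ≠ i₀ → k ≠ i₁ → ⇑(hM.eigenvectorBasis k) ⬝ᵥ z = 0) (y : n → ℝ) :
    z ⬝ᵥ y = (⇑(hM.eigenvectorBasis i₀) ⬝ᵥ z) * (⇑(hM.eigenvectorBasis i₀) ⬝ᵥ y) +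
      (⇑(hM.eigenvectorBasis i₁) ⬝ᵥ z) * (⇑(hM.eigenvectorBasis i₁) ⬝ᵥ y) := by
  rw [hM.dotProduct_eq_sum_eigenvectorBasis, ← Finset.sum_subset (Finset.subset_univ {i₀, i₁}),
    Finset.sum_pair hi]
  intro k _ hk
  simp only [Finset.mem_insert, Finset.mem_singleton, not_or] at hk
  rw [hz k hk.1 hk.2, zero_mul]

theorem eigenvectorBasis_dotProduct_eq_zero_of_orthogonal_eigenvectors {i₀ i₁ : n}
    (hi : i₀ ≠ i₁) {r : ℝ} (hr : ∀ k, k ≠ i₀ → k ≠ i₁ → |hM.eigenvalues k| ≤ r)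
    {z₁ z₂ : n → ℝ} {ν₁ ν₂ : ℝ} (hz₁ : M *ᵥ z₁ = ν₁ • z₁) (hz₂ : M *ᵥ z₂ = ν₂ • z₂)
    (hν₁ : r < |ν₁|) (hν₂ : r < |ν₂|) (h₁ : z₁ ≠ 0) (h₂ : z₂ ≠ 0) (h₁₂ : z₁ ⬝ᵥ z₂ = 0)
    {w : n → ℝ} (hw₁ : z₁ ⬝ᵥ w = 0) (hw₂ : z₂ ⬝ᵥ w = 0) {k : n}
    (hk : r < |hM.eigenvalues k|) : ⇑(hM.eigenvectorBasis k) ⬝ᵥ w = 0 := by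
  -- `z₁` and `z₂` have no component outside the plane of `u i₀`, `u i₁`, and they span it.
  have hplane : ∀ {z : n → ℝ} {ν : ℝ}, M *ᵥ z = ν • z → r < |ν| → ∀ y, z ⬝ᵥ y =
      (⇑(hM.eigenvectorBasis i₀) ⬝ᵥ z) * (⇑(hM.eigenvectorBasis i₀) ⬝ᵥ y) +
      (⇑(hM.eigenvectorBasis i₁) ⬝ᵥ z) * (⇑(hM.eigenvectorBasis i₁) ⬝ᵥ y) :=
    fun hz hν => hM.dotProduct_eq_of_eigenvectorBasis_dotProduct_eq_zero hi fun k h₀ h₁ =>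
      hM.eigenvectorBasis_dotProduct_eq_zero_of_mulVec_eq_smul hz fun hk =>
        (hν.trans_le (hk ▸ hr k h₀ h₁)).false
  obtain ⟨h₀w, h₁w⟩ := eq_zero_of_orthogonal_pair
    ((hplane hz₁ hν₁ z₂).symm.trans h₁₂)
    ((hplane hz₁ hν₁ z₁).symm.trans_ne (dotProduct_self_eq_zero.not.mpr h₁))
    ((hplane hz₂ hν₂ z₂).symm.trans_ne (dotProduct_self_eq_zero.not.mpr h₂))
    ((hplane hz₁ hν₁ w).symm.trans hw₁) ((hplane hz₂ hν₂ w).symm.trans hw₂)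
  by_cases h₀ : k = i₀
  · rwa [h₀]
  by_cases h₁ : k = i₁
  · rwa [h₁]
  exact absurd (hr k h₀ h₁) hk.not_ge

end Matrix.IsHermitian

section Biregular

variable {A B : Type*} [Fintype A] [Fintype B] {N : Matrix A B ℝ} {a b : ℝ}

theorem fromBlocks_mulVec_sumElim_const (ha : ∀ i, ∑ j, N i j = a) (hb : ∀ j, ∑ i, N i j = b)
    (α β : ℝ) :
    fromBlocks 0 N Nᵀ 0 *ᵥ Sum.elim (fun _ => α) (fun _ => β) =
      Sum.elim (fun _ => a * β) (fun _ => b * α) := by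
  ext (i | j) <;> simp [mulVec, dotProduct, ← Finset.sum_mul, ha, hb]

theorem mul_card_eq_mul_card (ha : ∀ i, ∑ j, N i j = a) (hb : ∀ j, ∑ i, N i j = b) :
    a * Fintype.card A = b * Fintype.card B := by
  have h := Finset.sum_comm (s := Finset.univ) (t := Finset.univ) (f := fun i j => N i j)
  simp only [ha, hb, Finset.sum_const, Finset.card_univ, nsmul_eq_mul] at h
  linarith

theorem abs_le_sqrt_of_fromBlocks_mulVec_eq_smul [DecidableEq A] [DecidableEq B]
    (hN : ∀ i j, 0 ≤ N i j) (ha : ∀ i, ∑ j, N i j = a) (hb : ∀ j, ∑ i, N i j = b)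
    {u : A ⊕ B → ℝ} (hu : u ≠ 0) {ν : ℝ} (h : fromBlocks 0 N Nᵀ 0 *ᵥ u = ν • u) :
    |ν| ≤ √(a * b) := by
  refine Real.abs_le_sqrt (sq_le_of_mulVec_eq_smul ?_ (fun p => ?_) hu h)
  · rintro (i | j) (i' | j') <;> simp [hN]
  · have h1 : (1 : A ⊕ B → ℝ) = Sum.elim (fun _ => 1) (fun _ => 1) := by ext (i | j) <;> rfl
    rw [h1, fromBlocks_mulVec_sumElim_const ha hb, fromBlocks_mulVec_sumElim_const ha hb]
    rcases p with i | j <;> simp [mul_comm]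

theorem fromBlocks_mulVec_sqrt (ha : ∀ i, ∑ j, N i j = a) (hb : ∀ j, ∑ i, N i j = b)
    (ha₀ : 0 ≤ a) (hb₀ : 0 ≤ b) {σ : ℝ} (hσ : σ ^ 2 = 1) :
    fromBlocks 0 N Nᵀ 0 *ᵥ Sum.elim (fun _ => √a) (fun _ => σ * √b) =
      (σ * √(a * b)) • Sum.elim (fun _ => √a) (fun _ => σ * √b) := by
  rw [fromBlocks_mulVec_sumElim_const ha hb, Real.sqrt_mul ha₀]
  have hsa := Real.mul_self_sqrt ha₀
  have hsb := Real.mul_self_sqrt hb₀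
  ext (i | j) <;> simp only [Sum.elim_inl, Sum.elim_inr, Pi.smul_apply, smul_eq_mul]
  · linear_combination (-σ * √b) * hsa
  · linear_combination (-σ ^ 2 * √a) * hsb - b * √a * hσ

theorem eigenvectorBasis_dotProduct_sumElim_zero_eq_zero [DecidableEq A] [DecidableEq B]
    [Nonempty B] (hN : ∀ i j, 0 ≤ N i j) (ha : ∀ i, ∑ j, N i j = a) (hb : ∀ j, ∑ i, N i j = b)
    (ha₀ : 0 ≤ a) (hM : (fromBlocks 0 N Nᵀ 0).IsHermitian) {i₀ i₁ : A ⊕ B} (hi : i₀ ≠ i₁)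
    {r : ℝ} (hr₀ : 0 ≤ r) (hr : ∀ k, k ≠ i₀ → k ≠ i₁ → |hM.eigenvalues k| ≤ r)
    {y : B → ℝ} (hy : ∑ j, y j = 0) {k : A ⊕ B} (hk : r < |hM.eigenvalues k|) :
    ⇑(hM.eigenvectorBasis k) ⬝ᵥ Sum.elim 0 y = 0 := by
  have hr' : r < √(a * b) := hk.trans_le <| abs_le_sqrt_of_fromBlocks_mulVec_eq_smul hN ha hb
    (by simpa using hM.eigenvectorBasis.orthonormal.ne_zero k) (hM.mulVec_eigenvectorBasis k)
  have hb₀ : 0 < b := pos_of_mul_pos_right (Real.sqrt_pos.mp (hr₀.trans_lt hr')) ha₀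
  have hz : ∀ σ : ℝ, σ ≠ 0 → Sum.elim (fun _ : A => √a) (fun _ : B => σ * √b) ≠ 0 :=
    fun σ hσ h => by
      simpa [hσ, (Real.sqrt_pos.mpr hb₀).ne'] using congrFun h (Sum.inr (Classical.arbitrary B))
  refine hM.eigenvectorBasis_dotProduct_eq_zero_of_orthogonal_eigenvectors hi hr
    (fromBlocks_mulVec_sqrt ha hb ha₀ hb₀.le (one_pow 2))
    (fromBlocks_mulVec_sqrt ha hb ha₀ hb₀.le neg_one_sq) ?_ ?_
    (hz 1 one_ne_zero) (hz (-1) (by norm_num)) ?_ ?_ ?_ hk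
  · rwa [one_mul, abs_of_nonneg (Real.sqrt_nonneg _)]
  · rwa [neg_one_mul, abs_neg, abs_of_nonneg (Real.sqrt_nonneg _)]
  · simp [dotProduct, Real.mul_self_sqrt ha₀, Real.mul_self_sqrt hb₀.le]
    linear_combination mul_card_eq_mul_card ha hb
  all_goals simp [dotProduct, ← Finset.mul_sum, hy]

end Biregular

section CenteredIndicator

variable {B : Type*} [Fintype B] [DecidableEq B]

noncomputable def centeredIndicator (Y : Finset B) : B → ℝ :=
  fun j => (if j ∈ Y then 1 else 0) - Y.card / Fintype.card B

theorem sum_centeredIndicator [Nonempty B] (Y : Finset B) : ∑ j, centeredIndicator Y j = 0 := by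
  have hB : (Fintype.card B : ℝ) ≠ 0 := Nat.cast_ne_zero.mpr Fintype.card_ne_zero
  simp [centeredIndicator, Finset.sum_sub_distrib, mul_div_cancel₀ _ hB]

theorem centeredIndicator_dotProduct_self_le [Nonempty B] (Y : Finset B) :
    centeredIndicator Y ⬝ᵥ centeredIndicator Y ≤ Y.card := by
  set c := centeredIndicator Y
  have hc : c ⬝ᵥ c = ∑ j ∈ Y, c j - Y.card / Fintype.card B * ∑ j, c j :=
    calc c ⬝ᵥ c = ∑ j, (c j * (if j ∈ Y then 1 else 0) - Y.card / Fintype.card B * c j) :=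
          Finset.sum_congr rfl fun j _ => by simp only [c, centeredIndicator]; ring
      _ = _ := by simp [Finset.sum_sub_distrib, Finset.mul_sum]
  rw [hc, sum_centeredIndicator, mul_zero, sub_zero]
  simp [c, centeredIndicator]
  positivity

theorem indicator_dotProduct_mulVec_centeredIndicator {A : Type*} [Fintype A] [DecidableEq A]
    {N : Matrix A B ℝ} {a : ℝ} (ha : ∀ i, ∑ j, N i j = a) (X : Finset A) (Y : Finset B) :
    (fun i => if i ∈ X then 1 else 0) ⬝ᵥ (N *ᵥ centeredIndicator Y) =
      ∑ x ∈ X, ∑ y ∈ Y, N x y - a / Fintype.card B * X.card * Y.card := by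
  have hrow : ∀ i, (N *ᵥ centeredIndicator Y) i =
      ∑ j ∈ Y, N i j - a * (Y.card / Fintype.card B) := fun i => by
    simp [mulVec, dotProduct, centeredIndicator, mul_sub, Finset.sum_sub_distrib,
      ← Finset.sum_mul, ha, Finset.sum_ite_mem]
  simp [dotProduct, hrow, ite_mul, Finset.sum_ite_mem, Finset.sum_sub_distrib]
  ring

end CenteredIndicator

theorem Antitone.apply_le_apply_two {α : Type*} [Preorder α] {m : ℕ} {f : Fin m → α}
    (hf : Antitone f) (hm : 2 < m) {i : Fin m} (h₀ : i ≠ ⟨0, by omega⟩)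
    (h₁ : i ≠ ⟨1, by omega⟩) : f i ≤ f ⟨2, hm⟩ := by
  simp only [ne_eq, Fin.ext_iff] at h₀ h₁
  exact hf (Fin.mk_le_of_le_val (by omega))

/-- Expander mixing lemma for bipartite biregular graphs:
with eigenvalues of the adjacency matrix `M = [[0,N],[Nᵀ,0]]` enumerated in order
of decreasing absolute value (via the equiv `e`), the number of edges between
`X ⊆ A` and `Y ⊆ B` satisfies
`|e(X,Y) - (a/|B|)|X||Y|| ≤ |λ₃| √(|X||Y|)`. -/
theorem expander_mixing_bipartite
    (A B : Type) [Fintype A] [Fintype B] [DecidableEq A] [DecidableEq B]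
    [Nonempty B] (a b : ℕ)
    (N : Matrix A B ℝ) (hN : ∀ i j, N i j = 0 ∨ N i j = 1)
    (ha : ∀ i, ∑ j, N i j = (a : ℝ)) (hb : ∀ j, ∑ i, N i j = (b : ℝ))
    (M : Matrix (A ⊕ B) (A ⊕ B) ℝ)
    (hMdef : M = Matrix.fromBlocks 0 N Nᵀ 0)
    (hM : M.IsHermitian)
    (hcard : 2 < Fintype.card (A ⊕ B))
    (e : Fin (Fintype.card (A ⊕ B)) ≃ (A ⊕ B))
    (hsort : ∀ i j, i ≤ j → |hM.eigenvalues (e j)| ≤ |hM.eigenvalues (e i)|)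
    (X : Finset A) (Y : Finset B) :
    |(∑ x ∈ X, ∑ y ∈ Y, N x y) -
        ((a : ℝ) / (Fintype.card B : ℝ)) * X.card * Y.card| ≤
      |hM.eigenvalues (e ⟨2, hcard⟩)| * Real.sqrt ((X.card : ℝ) * Y.card) := by
  subst hMdef
  set r := |hM.eigenvalues (e ⟨2, hcard⟩)|
  set v : A ⊕ B → ℝ := Sum.elim (fun i => if i ∈ X then 1 else 0) 0
  set w : A ⊕ B → ℝ := Sum.elim 0 (centeredIndicator Y)
  have hvMw : v ⬝ᵥ (fromBlocks 0 N Nᵀ 0 *ᵥ w) =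
      ∑ x ∈ X, ∑ y ∈ Y, N x y - (a / Fintype.card B) * X.card * Y.card := by
    simp [v, w, fromBlocks_mulVec, sumElim_dotProduct_sumElim,
      indicator_dotProduct_mulVec_centeredIndicator ha]
  have hvv : v ⬝ᵥ v = X.card := by simp [v, dotProduct]
  have hww : w ⬝ᵥ w ≤ Y.card := by
    simpa [w, sumElim_dotProduct_sumElim] using centeredIndicator_dotProduct_self_le Y
  have htail : ∀ k, k ≠ e ⟨0, by omega⟩ → k ≠ e ⟨1, by omega⟩ → |hM.eigenvalues k| ≤ r :=
    fun k h₀ h₁ => by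
      simpa using Antitone.apply_le_apply_two (f := fun i => |hM.eigenvalues (e i)|) hsort hcard
        (i := e.symm k) (fun h => h₀ (e.symm_apply_eq.mp h)) (fun h => h₁ (e.symm_apply_eq.mp h))
  have hlarge : ∀ k, |hM.eigenvalues k| ≤ r ∨ ⇑(hM.eigenvectorBasis k) ⬝ᵥ w = 0 :=
    fun k => or_iff_not_imp_left.mpr fun hk =>
      eigenvectorBasis_dotProduct_sumElim_zero_eq_zero
        (fun i j => by rcases hN i j with h | h <;> simp [h]) ha hb a.cast_nonneg hM
        (e.injective.ne (by simp)) (abs_nonneg _) htail (sum_centeredIndicator Y) (not_le.mp hk)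
  rw [← hvMw]
  calc |v ⬝ᵥ (fromBlocks 0 N Nᵀ 0 *ᵥ w)| ≤ r * (√(v ⬝ᵥ v) * √(w ⬝ᵥ w)) :=
        hM.abs_dotProduct_mulVec_le (abs_nonneg _) v hlarge
    _ ≤ r * √(X.card * Y.card) := by
        rw [hvv, ← Real.sqrt_mul (Nat.cast_nonneg _)]
        gcongr
end

section
/- The number of h-planes of F_q^d containing both of two distinct k-planes V₁, V₂ with rank(V₁,V₂) = t equals (1+o(1))·q^{(d−h)(h−t)} as q → ∞ (with d,h,k,t fixed). -/
/-!
An h-plane `x + W` contains `uc + span u` and `vc + span v` exactly when it is `uc + W` with `W`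
containing the `t`-dimensional space `T = span u ⊔ span v ⊔ span {vc - uc}`. Passing to the
quotient by `T`, these planes are the `m`-dimensional subspaces of an `n`-dimensional space, where
`m = h - t` and `n = d - t`. Counting linearly independent `m`-tuples through their span, their
number `N` satisfies `N · ∏_{i<m} (q^m - q^i) = ∏_{i<m} (q^n - q^i)`. Comparing factors gives
`q^{m(n-m)} ≤ N`, and `q^m - q^i ≥ q^m (1 - 1/q)` with Bernoulli's inequality gives
`(1 - m/q) N ≤ q^{m(n-m)}`.
-/

open Pointwise Module Submodule

section Cosets
variable {R V : Type*} [Ring R] [AddCommGroup V] [Module R V]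

theorem vadd_coe_subset_vadd_coe_iff {U W : Submodule R V} {a x : V} :
    a +ᵥ (U : Set V) ⊆ x +ᵥ (W : Set V) ↔ a - x ∈ W ∧ U ≤ W := by
  constructor
  · intro hsub
    have hmem : ∀ u ∈ U, a - x + u ∈ W := fun u hu => by
      have hau : a + u ∈ a +ᵥ (U : Set V) := (mem_leftAddCoset_iff a).2 (by simpa using hu)
      have := (mem_leftAddCoset_iff x).1 (hsub hau)
      rwa [neg_add_eq_sub, add_sub_right_comm] at this
    have ha : a - x ∈ W := by simpa using hmem 0 U.zero_mem
    exact ⟨ha, fun u hu => by simpa using W.sub_mem (hmem u hu) ha⟩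
  · rintro ⟨ha, hUW⟩ y hy
    rw [mem_leftAddCoset_iff] at hy ⊢
    simpa [neg_add_eq_sub, sub_add_sub_cancel'] using W.add_mem ha (hUW hy)

theorem card_planes_containing_cosets_eq (h : ℕ) (a b : V) (U U' : Submodule R V) :
    Nat.card {S : Set V | ∃ (W : Submodule R V) (x : V), finrank R W = h ∧
        S = x +ᵥ (W : Set V) ∧ a +ᵥ (U : Set V) ⊆ S ∧ b +ᵥ (U' : Set V) ⊆ S} =
      Nat.card {W : Submodule R V // finrank R W = h ∧ U ⊔ U' ⊔ span R {b - a} ≤ W} := by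
  have hset : {S : Set V | ∃ (W : Submodule R V) (x : V), finrank R W = h ∧
        S = x +ᵥ (W : Set V) ∧ a +ᵥ (U : Set V) ⊆ S ∧ b +ᵥ (U' : Set V) ⊆ S} =
      (fun W : Submodule R V => a +ᵥ (W : Set V)) ''
        {W | finrank R W = h ∧ U ⊔ U' ⊔ span R {b - a} ≤ W} := by
    ext S
    simp only [Set.mem_ofPred_eq, Set.mem_image, sup_le_iff, span_singleton_le_iff_mem]
    constructor
    · rintro ⟨W, x, hW, rfl, haS, hbS⟩
      rw [vadd_coe_subset_vadd_coe_iff] at haS hbS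
      refine ⟨W, ⟨hW, ⟨haS.2, hbS.2⟩, by simpa using W.sub_mem hbS.1 haS.1⟩, ?_⟩
      exact (leftAddCoset_eq_iff W.toAddSubgroup).2
        (by simpa [neg_add_eq_sub] using W.neg_mem haS.1)
    · rintro ⟨W, ⟨hW, ⟨hU, hU'⟩, hba⟩, rfl⟩
      exact ⟨W, a, hW, rfl, vadd_coe_subset_vadd_coe_iff.2 ⟨by simp, hU⟩,
        vadd_coe_subset_vadd_coe_iff.2 ⟨hba, hU'⟩⟩
  have hinj : Function.Injective fun W : Submodule R V => a +ᵥ (W : Set V) :=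
    (AddAction.injective a).comp SetLike.coe_injective
  rw [hset, Nat.card_image_of_injective hinj]
  rfl

end Cosets

section Quotient
variable {K V : Type*} [DivisionRing K] [AddCommGroup V] [Module K V] [FiniteDimensional K V]

theorem finrank_comap_mkQ (T : Submodule K V) (W : Submodule K (V ⧸ T)) :
    finrank K (W.comap T.mkQ) = finrank K W + finrank K T := by
  have := LinearMap.finrank_range_add_finrank_ker (T.mkQ.domRestrict (W.comap T.mkQ))
  rw [LinearMap.range_domRestrict, map_comap_eq_of_surjective T.mkQ_surjective,
    LinearMap.ker_domRestrict, ker_mkQ,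
    (comapSubtypeEquivOfLe (le_comap_mkQ T W)).finrank_eq] at this
  exact this.symm

theorem card_submodules_ge_eq_card_submodules_quotient (T : Submodule K V) {h : ℕ}
    (hT : finrank K T ≤ h) :
    Nat.card {W : Submodule K V // finrank K W = h ∧ T ≤ W} =
      Nat.card {W : Submodule K (V ⧸ T) // finrank K W = h - finrank K T} := by
  have hset : {W : Submodule K V | finrank K W = h ∧ T ≤ W} =
      comap T.mkQ '' {W | finrank K W = h - finrank K T} := by
    ext W
    constructor
    · rintro ⟨hW, hTW⟩
      have hW' : (W.map T.mkQ).comap T.mkQ = W := by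
        rw [comap_map_mkQ, sup_eq_right.2 hTW]
      refine ⟨W.map T.mkQ, ?_, hW'⟩
      have := finrank_comap_mkQ T (W.map T.mkQ)
      rw [hW'] at this
      change finrank K _ = h - finrank K T
      omega
    · rintro ⟨W, hW, rfl⟩
      exact ⟨by rw [finrank_comap_mkQ, hW]; omega, le_comap_mkQ T W⟩
  have hinj := comap_injective_of_surjective T.mkQ_surjective
  exact (congrArg Nat.card (congrArg Set.Elem hset)).trans (Nat.card_image_of_injective hinj _)

end Quotient

section Span
variable {K V : Type*} [DivisionRing K] [AddCommGroup V] [Module K V]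

noncomputable def spanOfLinearIndependent {m : ℕ}
    (s : {s : Fin m → V // LinearIndependent K s}) :
    {W : Submodule K V // finrank K W = m} :=
  ⟨span K (Set.range s.1), by rw [finrank_span_eq_card s.2, Fintype.card_fin]⟩

noncomputable def spanOfLinearIndependentFiberEquiv [FiniteDimensional K V] {m : ℕ}
    (W : {W : Submodule K V // finrank K W = m}) :
    {s // spanOfLinearIndependent s = W} ≃ {t : Fin m → W.1 // LinearIndependent K t} where
  toFun s := ⟨fun i => ⟨s.1.1 i,
      congrArg Subtype.val s.2 ▸ subset_span (Set.mem_range_self i)⟩,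
    LinearIndependent.of_comp W.1.subtype s.1.2⟩
  invFun t := ⟨⟨W.1.subtype ∘ t.1, t.2.map' _ (ker_subtype _)⟩, Subtype.ext <|
    eq_of_le_of_finrank_eq (span_le.2 (Set.range_subset_iff.2 fun i => (t.1 i).2))
      (by rw [(spanOfLinearIndependent _).2, W.2])⟩
  left_inv _ := rfl
  right_inv _ := rfl

variable (K V) in
noncomputable def linearIndependentEquivSigma [FiniteDimensional K V] (m : ℕ) :
    {s : Fin m → V // LinearIndependent K s} ≃
      Σ W : {W : Submodule K V // finrank K W = m}, {t : Fin m → W.1 // LinearIndependent K t} :=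
  (Equiv.sigmaFiberEquiv spanOfLinearIndependent).symm.trans
    (Equiv.sigmaCongrRight spanOfLinearIndependentFiberEquiv)

end Span

section Count
variable {K V : Type*} [DivisionRing K] [Fintype K] [AddCommGroup V] [Module K V] [Finite V]

theorem card_submodules_finrank_mul_prod {m : ℕ} (hm : m ≤ finrank K V) :
    Nat.card {W : Submodule K V // finrank K W = m} *
        ∏ i : Fin m, (Fintype.card K ^ m - Fintype.card K ^ (i : ℕ)) =
      ∏ i : Fin m, (Fintype.card K ^ finrank K V - Fintype.card K ^ (i : ℕ)) := by
  have : Finite (Submodule K V) := Finite.of_injective _ SetLike.coe_injective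
  have : Fintype {W : Submodule K V // finrank K W = m} := Fintype.ofFinite _
  rw [← card_linearIndependent hm, Nat.card_congr (linearIndependentEquivSigma K V m),
    Nat.card_sigma, Nat.card_eq_fintype_card, ← Finset.card_univ, ← smul_eq_mul,
    ← Finset.sum_const]
  exact Finset.sum_congr rfl fun W _ => by rw [card_linearIndependent W.2.ge, W.2]

end Count

theorem pow_mul_prod_sub_pow_le_prod {q m n : ℕ} (hq : 0 < q) (hmn : m ≤ n) :
    q ^ (m * (n - m)) * ∏ i : Fin m, (q ^ m - q ^ (i : ℕ)) ≤
      ∏ i : Fin m, (q ^ n - q ^ (i : ℕ)) :=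
  calc q ^ (m * (n - m)) * ∏ i : Fin m, (q ^ m - q ^ (i : ℕ))
      = ∏ i : Fin m, q ^ (n - m) * (q ^ m - q ^ (i : ℕ)) := by
        rw [Finset.prod_mul_distrib, Finset.prod_const, Finset.card_univ, Fintype.card_fin,
          ← pow_mul, mul_comm (n - m)]
    _ ≤ ∏ i : Fin m, (q ^ n - q ^ (i : ℕ)) := Finset.prod_le_prod' fun i _ => by
        rw [Nat.mul_sub, ← pow_add, ← pow_add, Nat.sub_add_cancel hmn]
        exact Nat.sub_le_sub_left (Nat.pow_le_pow_right hq (by omega)) _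

theorem one_sub_div_mul_pow_le_prod {q : ℕ} (hq : 0 < q) (m : ℕ) :
    (1 - m / q : ℝ) * (q : ℝ) ^ (m * m) ≤
      ∏ i : Fin m, ((q ^ m - q ^ (i : ℕ) : ℕ) : ℝ) := by
  have hq' : (0 : ℝ) < q := by exact_mod_cast hq
  have hinv : (1 : ℝ) / q ≤ 1 := (div_le_one hq').2 (by exact_mod_cast hq)
  have hterm : ∀ i : Fin m,
      (q : ℝ) ^ m * (1 - 1 / q) ≤ ((q ^ m - q ^ (i : ℕ) : ℕ) : ℝ) := by
    intro i
    have hi : (q : ℝ) ^ (i : ℕ) * q ≤ (q : ℝ) ^ m := by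
      rw [← pow_succ]
      exact pow_le_pow_right₀ (by exact_mod_cast hq) i.2
    have hi' : (q : ℝ) ^ (i : ℕ) ≤ (q : ℝ) ^ m / q := (le_div_iff₀ hq').2 hi
    rw [Nat.cast_sub (Nat.pow_le_pow_right hq i.2.le), mul_one_sub, mul_one_div]
    push_cast
    linarith
  have hbernoulli : 1 - m / q ≤ (1 - 1 / q : ℝ) ^ m := by
    simpa [sub_eq_add_neg, div_eq_mul_inv] using
      one_add_mul_le_pow (a := -(1 / q : ℝ)) (by linarith [one_div_nonneg.2 hq'.le]) m
  calc (1 - m / q : ℝ) * (q : ℝ) ^ (m * m)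
      ≤ (1 - 1 / q : ℝ) ^ m * (q : ℝ) ^ (m * m) := by gcongr
    _ = ∏ _i : Fin m, (q : ℝ) ^ m * (1 - 1 / q) := by
        rw [Finset.prod_const, Finset.card_univ, Fintype.card_fin, mul_pow, ← pow_mul, mul_comm]
    _ ≤ ∏ i : Fin m, ((q ^ m - q ^ (i : ℕ) : ℕ) : ℝ) :=
        Finset.prod_le_prod (fun _ _ => by have := sub_nonneg.2 hinv; positivity)
          fun i _ => hterm i

section Asymptotics
variable {K V : Type*} [DivisionRing K] [Fintype K] [AddCommGroup V] [Module K V] [Finite V]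
  {m : ℕ}

theorem pow_le_card_submodules_finrank (hm : m ≤ finrank K V) :
    Fintype.card K ^ (m * (finrank K V - m)) ≤
      Nat.card {W : Submodule K V // finrank K W = m} := by
  have hD : 0 < ∏ i : Fin m, (Fintype.card K ^ m - Fintype.card K ^ (i : ℕ)) :=
    Finset.prod_pos fun i _ => Nat.sub_pos_of_lt (Nat.pow_lt_pow_right Fintype.one_lt_card i.2)
  exact Nat.le_of_mul_le_mul_right ((pow_mul_prod_sub_pow_le_prod Fintype.card_pos hm).trans
    (card_submodules_finrank_mul_prod hm).ge) hD

theorem one_sub_div_mul_card_submodules_finrank_le (hm : m ≤ finrank K V) :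
    (1 - m / Fintype.card K : ℝ) * Nat.card {W : Submodule K V // finrank K W = m} ≤
      (Fintype.card K : ℝ) ^ (m * (finrank K V - m)) := by
  set q := Fintype.card K
  set n := finrank K V
  set N := Nat.card {W : Submodule K V // finrank K W = m}
  have hcount :
      (N : ℝ) * ∏ i : Fin m, ((q ^ m - q ^ (i : ℕ) : ℕ) : ℝ) ≤ (q : ℝ) ^ (n * m) := by
    rw [← Nat.cast_prod]
    exact_mod_cast (card_submodules_finrank_mul_prod hm).trans_le <|
      (Finset.prod_le_prod' fun i _ => Nat.sub_le _ _).trans_eq <| by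
        rw [Finset.prod_const, Finset.card_univ, Fintype.card_fin, ← pow_mul]
  have hexp : n * m = m * (n - m) + m * m := by
    rw [← mul_add, Nat.sub_add_cancel hm, mul_comm]
  refine le_of_mul_le_mul_right ?_ (pow_pos (Nat.cast_pos.2 (Fintype.card_pos (α := K))) (m * m))
  calc (1 - m / q : ℝ) * N * (q : ℝ) ^ (m * m)
      = N * ((1 - m / q : ℝ) * (q : ℝ) ^ (m * m)) := by ring
    _ ≤ N * ∏ i : Fin m, ((q ^ m - q ^ (i : ℕ) : ℕ) : ℝ) :=
        mul_le_mul_of_nonneg_left (one_sub_div_mul_pow_le_prod Fintype.card_pos m) N.cast_nonneg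
    _ ≤ (q : ℝ) ^ (m * (n - m)) * (q : ℝ) ^ (m * m) := by rwa [← pow_add, ← hexp]

theorem abs_card_submodules_finrank_sub_pow_le (hm : m ≤ finrank K V) {ε : ℝ} (hε : 0 < ε)
    (hq : (1 + ε) * m ≤ ε * Fintype.card K) :
    |(Nat.card {W : Submodule K V // finrank K W = m} : ℝ) -
        (Fintype.card K : ℝ) ^ (m * (finrank K V - m))| ≤
      ε * (Fintype.card K : ℝ) ^ (m * (finrank K V - m)) := by
  have hlower : (Fintype.card K : ℝ) ^ (m * (finrank K V - m)) ≤
      Nat.card {W : Submodule K V // finrank K W = m} := by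
    exact_mod_cast pow_le_card_submodules_finrank hm
  set Q := (Fintype.card K : ℝ) ^ (m * (finrank K V - m))
  have hupper := one_sub_div_mul_card_submodules_finrank_le (K := K) (V := V) hm
  have hone : 1 ≤ (1 + ε) * (1 - m / Fintype.card K) := by
    have := (div_le_iff₀ (Nat.cast_pos.2 (Fintype.card_pos (α := K)))).2 hq
    rw [mul_div_assoc] at this
    linarith
  have hQ : 0 ≤ Q := by positivity
  rw [abs_le]
  constructor <;> nlinarith

end Asymptotics

/-- With `d, h, k, t` fixed (`t ≤ h < d`), the number of h-planes of
`F_q^d` containing both of two distinct k-planes `V₁, V₂` with `rank(V₁,V₂) = t`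
is `(1 + o(1)) · q^{(d-h)(h-t)}` as `q → ∞`. -/
theorem card_h_planes_containing_two_k_planes_asymp
    (d k h t : ℕ) (hth : t ≤ h) (hhd : h < d) :
    ∀ ε : ℝ, 0 < ε → ∃ q₀ : ℕ,
      ∀ (F : Type) [Field F] [Fintype F], q₀ ≤ Fintype.card F →
        ∀ (u v : Fin k → Fin d → F) (uc vc : Fin d → F),
          LinearIndependent F u → LinearIndependent F v →
          (uc +ᵥ (Submodule.span F (Set.range u) : Set (Fin d → F))) ≠
            (vc +ᵥ (Submodule.span F (Set.range v) : Set (Fin d → F))) →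
          Module.finrank F
            (Submodule.span F (Set.range u ∪ Set.range v ∪ {vc - uc})) = t →
          |(Nat.card {S : Set (Fin d → F) |
              ∃ (W : Submodule F (Fin d → F)) (x : Fin d → F),
                Module.finrank F W = h ∧ S = x +ᵥ (W : Set (Fin d → F)) ∧
                  (uc +ᵥ (Submodule.span F (Set.range u) : Set (Fin d → F))) ⊆ S ∧
                  (vc +ᵥ (Submodule.span F (Set.range v) : Set (Fin d → F))) ⊆ S} : ℝ) -
            (Fintype.card F : ℝ) ^ ((d - h) * (h - t))| ≤
          ε * (Fintype.card F : ℝ) ^ ((d - h) * (h - t)) := by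
  intro ε hε
  refine ⟨⌈(1 + ε) * h / ε⌉₊, fun F _ _ hq u v uc vc _ _ _ hrank => ?_⟩
  rw [card_planes_containing_cosets_eq, ← span_union, ← span_union,
    card_submodules_ge_eq_card_submodules_quotient _ (hrank.trans_le hth), hrank]
  set T := span F (Set.range u ∪ Set.range v ∪ {vc - uc})
  have hquot : finrank F ((Fin d → F) ⧸ T) = d - t := by
    have := T.finrank_quotient_add_finrank
    rw [hrank, finrank_fin_fun] at this
    omega
  have hqε : (1 + ε) * (h - t : ℕ) ≤ ε * Fintype.card F := by
    have hceil := (div_le_iff₀' hε).1 ((Nat.le_ceil _).trans (Nat.cast_le.2 hq))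
    have : ((h - t : ℕ) : ℝ) ≤ h := Nat.cast_le.2 (Nat.sub_le h t)
    nlinarith
  have := abs_card_submodules_finrank_sub_pow_le (V := (Fin d → F) ⧸ T) (m := h - t)
    (by omega) hε hqε
  rwa [hquot, show (h - t) * (d - t - (h - t)) = (d - h) * (h - t) by
    rw [mul_comm, Nat.sub_sub_sub_cancel_right hth]] at this
end
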